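/- For every ξ ∈ H: exp( i·S^μ(ξ^R̄) − i·B(ξ^R̄, J·ξ^Ī) − (i/2)·B(J·ξ^Ī, J·ξ^Ī) − (1/2)·g(ξ^Ī, ξ^Ī) + (i/2)·B(ξ,ξ) + (1/4)·g(ξ,ξ) ) = exp( (1/4)·g(ξ^R, ξ^R) − (1/4)·g(ξ^I, ξ^I) − (i/2)·g(ξ^R, ξ^I) ) · exp( i·C(ξ^R) + C(ξ^I) ) · exp( (i/2)·C(J·v) − (1/2)·C(v) ). -/

import Mathlib

/-! Isotropy of `V` gives `V ∩ J V = 0`, which forces the two decompositions of `ξ` to be related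
by `ξR̄ = ξR + J v` and `ξĪ = ξI - v`. On `V` the functional `C` is `g(·, v)`. After substituting,
the real parts of the two exponents agree by isotropy, and in the imaginary part the cross terms
of `B` collapse through `B(x, y) - B(y, x) = 2 ω(x, y)` to `ω(ξR̄, J ξĪ) = ½ g(ξR̄, ξĪ)`. -/

open Complex (I)

/-- `V` is isotropic for `ω = ½ Im ⟪·,·⟫`. -/
def Submodule.IsIsotropic {H : Type*} [NormedAddCommGroup H] [InnerProductSpace ℂ H]
    (V : Submodule ℝ H) : Prop :=
  ∀ a ∈ V, ∀ b ∈ V, (inner ℂ a b).im = 0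

theorem im_inner_I_smul_right {H : Type*} [NormedAddCommGroup H]
    [InnerProductSpace ℂ H] (x y : H) : (inner ℂ x (I • y)).im = (inner ℂ x y).re := by
  rw [inner_smul_right, Complex.I_mul_im]

theorem apply_add_add_of_isLinearMap {M : Type*} [AddCommGroup M] [Module ℝ M]
    (B : M → M → ℝ) (hB₁ : ∀ y, IsLinearMap ℝ (fun x => B x y))
    (hB₂ : ∀ x, IsLinearMap ℝ (B x)) (x u : M) :
    B (x + u) (x + u) = B x x + B x u + B u x + B u u := by
  rw [(hB₁ _).map_add, (hB₂ x).map_add, (hB₂ u).map_add]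
  ring

namespace Submodule.IsIsotropic

variable {H : Type*} [NormedAddCommGroup H] [InnerProductSpace ℂ H] {V : Submodule ℝ H}

theorem of_lagrangian
    (hVlag : ∀ x : H, x ∈ V ↔ ∀ w ∈ V, (1/2 : ℝ) * (inner ℂ x w : ℂ).im = 0) :
    V.IsIsotropic := fun a ha b hb => by
  simpa using (hVlag a).mp ha b hb

variable (hV : V.IsIsotropic)
include hV

theorem eq_zero_of_add_I_smul_eq_zero {a b : H} (ha : a ∈ V) (hb : b ∈ V)
    (h : a + I • b = 0) : a = 0 ∧ b = 0 := by
  have hre : (inner ℂ a (a + I • b)).re = (inner ℂ a a).re := by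
    rw [inner_add_right, Complex.add_re, inner_smul_right, Complex.I_mul_re, hV a ha b hb,
      neg_zero, add_zero]
  have ha0 : a = 0 := by
    rw [h, inner_zero_right, Complex.zero_re, eq_comm] at hre
    exact inner_self_eq_zero.mp (Complex.ext hre (hV a ha a ha))
  subst ha0
  rw [zero_add, smul_eq_zero] at h
  exact ⟨rfl, h.resolve_left Complex.I_ne_zero⟩

theorem add_I_smul_injective {a b a' b' : H} (ha : a ∈ V) (hb : b ∈ V) (ha' : a' ∈ V)
    (hb' : b' ∈ V) (h : a + I • b = a' + I • b') : a = a' ∧ b = b' := by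
  have h0 : (a - a') + I • (b - b') = 0 :=
    calc _ = a + I • b - (a' + I • b') := by rw [smul_sub]; abel
      _ = 0 := sub_eq_zero.mpr h
  simpa only [sub_eq_zero] using
    hV.eq_zero_of_add_I_smul_eq_zero (V.sub_mem ha ha') (V.sub_mem hb hb') h0

theorem re_inner_add_I_smul_self {a b : H} (ha : a ∈ V) (hb : b ∈ V) :
    (inner ℂ (a + I • b) (a + I • b)).re = (inner ℂ a a).re + (inner ℂ b b).re := by
  rw [inner_add_left, inner_add_right, inner_add_right, inner_smul_left, inner_smul_right,
    inner_smul_right, inner_smul_left]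
  simp only [Complex.conj_I, Complex.add_re, Complex.mul_re, Complex.mul_im, Complex.neg_re,
    Complex.neg_im, Complex.I_re, Complex.I_im, hV a ha b hb, hV b hb a ha]
  ring

theorem re_inner_add_I_smul_sub {a b v : H} (hb : b ∈ V) (hv : v ∈ V) :
    (inner ℂ (a + I • v) (b - v)).re = (inner ℂ a b).re - (inner ℂ a v).re := by
  simp only [inner_add_left, inner_sub_right, inner_smul_left, Complex.conj_I,
    neg_mul, Complex.add_re, Complex.sub_re, Complex.neg_re, Complex.I_mul_re,
    hV v hv b hb, hV v hv v hv]
  ring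

end Submodule.IsIsotropic

theorem statement12_general
    {H : Type*} [NormedAddCommGroup H] [InnerProductSpace ℂ H]
    (V : Submodule ℝ H)
    (hVlag : ∀ x : H, x ∈ V ↔ ∀ w ∈ V, (1/2 : ℝ) * (inner ℂ x w : ℂ).im = 0)
    (η₀ : H)
    (B : H → H → ℝ)
    (hB₁ : ∀ y : H, IsLinearMap ℝ (fun x => B x y))
    (hB₂ : ∀ x : H, IsLinearMap ℝ (B x))
    (hωB : ∀ x y : H,
      (1/2 : ℝ) * (inner ℂ x y : ℂ).im = (1/2 : ℝ) * (B x y - B y x))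
    (Sμ : H → ℝ)
    (C : H →ₗ[ℝ] ℝ)
    (hC : ∀ ζ ∈ V, ∀ η : H, (∃ w ∈ V, η = η₀ + w) →
      C ζ = 2 * ((1/2 : ℝ) * (inner ℂ ζ η : ℂ).im))
    (hSμC : ∀ η : H, (∃ w ∈ V, η = η₀ + w) →
      Sμ η = (1/2 : ℝ) * C η - (1/2 : ℝ) * B η η)
    (v : H) (hv : v ∈ V) (hvA : ∃ w ∈ V, Complex.I • v = η₀ + w)
    (ξ : H)
    (ξR ξI : H) (hξR : ξR ∈ V) (hξI : ξI ∈ V)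
    (hdec : ξ = ξR + Complex.I • ξI)
    (ξRb ξIb : H) (hξRb : ∃ w ∈ V, ξRb = η₀ + w) (hξIb : ξIb ∈ V)
    (hdecb : ξ = ξRb + Complex.I • ξIb) :
    Complex.exp (Complex.I * ((Sμ ξRb : ℝ) : ℂ)
        - Complex.I * ((B ξRb (Complex.I • ξIb) : ℝ) : ℂ)
        - (Complex.I / 2) * ((B (Complex.I • ξIb) (Complex.I • ξIb) : ℝ) : ℂ)
        - (1/2 : ℂ) * (((inner ℂ ξIb ξIb : ℂ).re : ℝ) : ℂ)
        + (Complex.I / 2) * ((B ξ ξ : ℝ) : ℂ)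
        + (1/4 : ℂ) * (((inner ℂ ξ ξ : ℂ).re : ℝ) : ℂ))
      = Complex.exp ((1/4 : ℂ) * (((inner ℂ ξR ξR : ℂ).re : ℝ) : ℂ)
          - (1/4 : ℂ) * (((inner ℂ ξI ξI : ℂ).re : ℝ) : ℂ)
          - (Complex.I / 2) * (((inner ℂ ξR ξI : ℂ).re : ℝ) : ℂ))
        * Complex.exp (Complex.I * ((C ξR : ℝ) : ℂ) + ((C ξI : ℝ) : ℂ))
        * Complex.exp ((Complex.I / 2) * ((C (Complex.I • v) : ℝ) : ℂ)
          - (1/2 : ℂ) * ((C v : ℝ) : ℂ)) := by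
  have hV := Submodule.IsIsotropic.of_lagrangian hVlag
  have hRbv : ξRb - I • v ∈ V := by
    obtain ⟨w, hw, rfl⟩ := hξRb
    obtain ⟨w', hw', hw'v⟩ := hvA
    rw [hw'v, add_sub_add_left_eq_sub]
    exact V.sub_mem hw hw'
  obtain ⟨hR, hI⟩ := hV.add_I_smul_injective hξR hξI hRbv (V.add_mem hξIb hv)
    (by rw [← hdec, hdecb, smul_add]; abel)
  have hRb : ξRb = ξR + I • v := by rw [hR, sub_add_cancel]
  have hIb : ξIb = ξI - v := by rw [hI, add_sub_cancel_right]
  have hCV : ∀ ζ ∈ V, C ζ = (inner ℂ ζ v).re := fun ζ hζ => by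
    rw [hC ζ hζ _ hvA, im_inner_I_smul_right]
    ring
  have hre : -(1/2) * (inner ℂ ξIb ξIb).re + (1/4) * (inner ℂ ξ ξ).re
      = (1/4) * (inner ℂ ξR ξR).re - (1/4) * (inner ℂ ξI ξI).re + C ξI - (1/2) * C v := by
    rw [hdec, hV.re_inner_add_I_smul_self hξR hξI, hIb, inner_sub_sub_self,
      ← inner_conj_symm v ξI, hCV ξI hξI, hCV v hv]
    simp only [Complex.sub_re, Complex.add_re, Complex.conj_re]
    ring
  have him : Sμ ξRb - B ξRb (I • ξIb) - (1/2) * B (I • ξIb) (I • ξIb) + (1/2) * B ξ ξ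
      = -(1/2) * (inner ℂ ξR ξI).re + C ξR + (1/2) * C (I • v) := by
    have hg : (inner ℂ ξRb ξIb).re = (inner ℂ ξR ξI).re - C ξR := by
      rw [hRb, hIb, hV.re_inner_add_I_smul_sub hξI hv, hCV ξR hξR]
    have hCRb : C ξRb = C ξR + C (I • v) := by rw [hRb, map_add]
    rw [hSμC ξRb hξRb, hdecb, apply_add_add_of_isLinearMap B hB₁ hB₂, hCRb]
    linarith [hωB ξRb (I • ξIb), im_inner_I_smul_right ξRb ξIb]
  have hre' := congrArg ((↑) : ℝ → ℂ) hre
  have him' := congrArg ((↑) : ℝ → ℂ) him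
  push_cast at hre' him'
  rw [← Complex.exp_add, ← Complex.exp_add]
  congr 1
  linear_combination hre' + I * him'

/-- Factorization identity for the amplitude of a linear theory
modified by a linear (source-like) term.  With `V ⊆ H` a closed Lagrangian
subspace, `A := η₀ + V ⊆ H`, `B` bilinear inducing `ω`, `S^μ` the affine action,
`C` the linear term, `v` the unique element of `V` with `J·v ∈ A`, and the unique
decompositions `ξ = ξR + J·ξI` (`ξR, ξI ∈ V`) and `ξ = ξR̄ + J·ξĪ`
(`ξR̄ ∈ A`, `ξĪ ∈ V`), one has for every `ξ ∈ H`: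
`exp( i·S^μ(ξR̄) − i·B(ξR̄, J·ξĪ) − (i/2)·B(J·ξĪ, J·ξĪ) − (1/2)·g(ξĪ,ξĪ)
  + (i/2)·B(ξ,ξ) + (1/4)·g(ξ,ξ) )
= exp( (1/4)·g(ξR,ξR) − (1/4)·g(ξI,ξI) − (i/2)·g(ξR,ξI) )
  · exp( i·C(ξR) + C(ξI) ) · exp( (i/2)·C(J·v) − (1/2)·C(v) )`. -/
theorem statement12
    {H : Type*} [NormedAddCommGroup H] [InnerProductSpace ℂ H] [CompleteSpace H]
    (V : Submodule ℝ H) (hVclosed : IsClosed (V : Set H))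
    (hVlag : ∀ x : H, x ∈ V ↔ ∀ w ∈ V, (1/2 : ℝ) * (inner ℂ x w : ℂ).im = 0)
    (η₀ : H)
    (B : H → H → ℝ)
    (hB₁ : ∀ y : H, IsLinearMap ℝ (fun x => B x y))
    (hB₂ : ∀ x : H, IsLinearMap ℝ (B x))
    (hωB : ∀ x y : H,
      (1/2 : ℝ) * (inner ℂ x y : ℂ).im = (1/2 : ℝ) * (B x y - B y x))
    (Sμ : H → ℝ)
    (hSμ : ∀ η : H, (∃ w ∈ V, η = η₀ + w) → ∀ ζ ∈ V,
      Sμ (η + ζ) = Sμ η - (1/2 : ℝ) * B ζ ζ - B η ζ)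
    (C : H →ₗ[ℝ] ℝ)
    (hC : ∀ ζ ∈ V, ∀ η : H, (∃ w ∈ V, η = η₀ + w) →
      C ζ = 2 * ((1/2 : ℝ) * (inner ℂ ζ η : ℂ).im))
    (hSμC : ∀ η : H, (∃ w ∈ V, η = η₀ + w) →
      Sμ η = (1/2 : ℝ) * C η - (1/2 : ℝ) * B η η)
    (v : H) (hv : v ∈ V) (hvA : ∃ w ∈ V, Complex.I • v = η₀ + w)
    (hvuniq : ∀ v' : H, v' ∈ V → (∃ w ∈ V, Complex.I • v' = η₀ + w) → v' = v)
    (ξ : H)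
    (ξR ξI : H) (hξR : ξR ∈ V) (hξI : ξI ∈ V)
    (hdec : ξ = ξR + Complex.I • ξI)
    (ξRb ξIb : H) (hξRb : ∃ w ∈ V, ξRb = η₀ + w) (hξIb : ξIb ∈ V)
    (hdecb : ξ = ξRb + Complex.I • ξIb) :
    Complex.exp (Complex.I * ((Sμ ξRb : ℝ) : ℂ)
        - Complex.I * ((B ξRb (Complex.I • ξIb) : ℝ) : ℂ)
        - (Complex.I / 2) * ((B (Complex.I • ξIb) (Complex.I • ξIb) : ℝ) : ℂ)
        - (1/2 : ℂ) * (((inner ℂ ξIb ξIb : ℂ).re : ℝ) : ℂ)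
        + (Complex.I / 2) * ((B ξ ξ : ℝ) : ℂ)
        + (1/4 : ℂ) * (((inner ℂ ξ ξ : ℂ).re : ℝ) : ℂ))
      = Complex.exp ((1/4 : ℂ) * (((inner ℂ ξR ξR : ℂ).re : ℝ) : ℂ)
          - (1/4 : ℂ) * (((inner ℂ ξI ξI : ℂ).re : ℝ) : ℂ)
          - (Complex.I / 2) * (((inner ℂ ξR ξI : ℂ).re : ℝ) : ℂ))
        * Complex.exp (Complex.I * ((C ξR : ℝ) : ℂ) + ((C ξI : ℝ) : ℂ))
        * Complex.exp ((Complex.I / 2) * ((C (Complex.I • v) : ℝ) : ℂ)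
          - (1/2 : ℂ) * ((C v : ℝ) : ℂ)) :=
  statement12_general V hVlag η₀ B hB₁ hB₂ hωB Sμ C hC hSμC v hv hvA ξ ξR ξI hξR hξI hdec ξRb ξIb
    hξRb hξIb hdecb
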